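/- Let $g_0,\dots,g_N$ and $x_0,\dots,x_N$ be polynomials in $k[u_1,\dots,u_r]$ and $m \ge 1$. Suppose $\sum_{j=0}^N g_j \cdot D_I x_j = 0$ for every multi-index $I$ with $|I| \le m-1$. Then for every multi-index $I = (i_1,\dots,i_r)$ with $|I| = m-1$ and every $k$, one has $\sum_{j=0}^N (\partial_k g_j)\cdot D_I x_j = -(i_k+1)\sum_{j=0}^N g_j \cdot D_{I_k} x_j$, where $I_k$ is obtained from $I$ by increasing the $k$-th entry by $1$. -/

import Mathlib

open MvPolynomial Finset

/-- The multivariate Hasse derivative `D_I` on `k[u_1,…,u_r]`, defined on monomials by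
`D_I(u^J) = (∏ t, (J t).choose (I t)) · u^(J-I)`. -/
noncomputable def hasse {k : Type*} [CommRing k] {r : ℕ} (I : Fin r → ℕ)
    (p : MvPolynomial (Fin r) k) : MvPolynomial (Fin r) k :=
  (AddMonoidAlgebra.coeff p).sum fun J c =>
    MvPolynomial.monomial (J - Finsupp.equivFunOnFinite.symm I)
      (c * ((∏ t, (J t).choose (I t) : ℕ) : k))

lemma hasse_monomial {k : Type*} [CommRing k] {r : ℕ} (I : Fin r → ℕ)
    (J : Fin r →₀ ℕ) (c : k) :
    hasse I (MvPolynomial.monomial J c) =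
      MvPolynomial.monomial (J - Finsupp.equivFunOnFinite.symm I)
        (c * ((∏ t, (J t).choose (I t) : ℕ) : k)) := by
  unfold hasse
  rw [MvPolynomial.sum_monomial_eq]
  simp

lemma hasse_add {k : Type*} [CommRing k] {r : ℕ} (I : Fin r → ℕ)
    (p q : MvPolynomial (Fin r) k) :
    hasse I (p + q) = hasse I p + hasse I q := by
  unfold hasse
  apply Finsupp.sum_add_index' <;> intros <;> simp [add_mul]

lemma pderiv_hasse {k : Type*} [CommRing k] {r : ℕ} (t : Fin r) (I : Fin r → ℕ)
    (p : MvPolynomial (Fin r) k) :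
    MvPolynomial.pderiv t (hasse I p)
      = (I t + 1) • hasse (Function.update I t (I t + 1)) p := by
  induction p using MvPolynomial.induction_on' with
  | monomial J c =>
    rw [hasse_monomial, hasse_monomial, MvPolynomial.pderiv_monomial,
      MvPolynomial.smul_monomial]
    have hexp : J - Finsupp.equivFunOnFinite.symm I - Finsupp.single t 1
        = J - Finsupp.equivFunOnFinite.symm (Function.update I t (I t + 1)) := by
      ext s
      rcases eq_or_ne s t with rfl | hs
      · simp [Function.update_self, Nat.sub_sub]
      · simp [Function.update_of_ne hs, Finsupp.single_apply, Ne.symm hs]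
    rw [hexp]
    congr 1
    -- coefficient identity
    have hprod1 : (∏ s, (J s).choose (Function.update I t (I t + 1) s))
        = (J t).choose (I t + 1) * ∏ s ∈ Finset.univ.erase t, (J s).choose (I s) := by
      rw [← Finset.mul_prod_erase _ _ (Finset.mem_univ t), Function.update_self]
      congr 1
      exact Finset.prod_congr rfl fun s hs => by
        rw [Function.update_of_ne (Finset.ne_of_mem_erase hs)]
    have hprod2 : (∏ s, (J s).choose (I s))
        = (J t).choose (I t) * ∏ s ∈ Finset.univ.erase t, (J s).choose (I s) :=
      (Finset.mul_prod_erase _ _ (Finset.mem_univ t)).symm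
    have hkey : ((J t).choose (I t + 1) : k) * (I t + 1) = (J t).choose (I t) * ((J t - I t : ℕ) : k) := by
      exact_mod_cast congrArg (Nat.cast : ℕ → k) (Nat.choose_succ_right_eq (J t) (I t))
    have hJI : (J - Finsupp.equivFunOnFinite.symm I) t = J t - I t := by simp
    rw [hJI, hprod1, hprod2]
    push_cast
    linear_combination (-(c * ∏ s ∈ Finset.univ.erase t, ((J s).choose (I s) : k))) * hkey
  | add p q hp hq =>
    rw [hasse_add, hasse_add, map_add, hp, hq, smul_add]


/-- If `∑_j g_j · D_I x_j = 0` for all `|I| ≤ m-1`, then for every `I` with `|I| = m-1` and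
every `k`, `∑_j (∂_k g_j) · D_I x_j = -(i_k+1) ∑_j g_j · D_{I_k} x_j`, where `I_k` increases the
`k`-th entry of `I` by one. -/
theorem stmt4 {k : Type*} [Field k] {r N m : ℕ} (hm : 1 ≤ m)
    (g x : Fin (N + 1) → MvPolynomial (Fin r) k)
    (H : ∀ I : Fin r → ℕ, (∑ t, I t) + 1 ≤ m → ∑ j, g j * hasse I (x j) = 0) :
    ∀ (t : Fin r) (I : Fin r → ℕ), (∑ s, I s) + 1 = m →
      ∑ j, MvPolynomial.pderiv t (g j) * hasse I (x j)
        = -((I t + 1) • ∑ j, g j * hasse (Function.update I t (I t + 1)) (x j)) := by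
  intro t I hI
  have h0 : ∑ j, g j * hasse I (x j) = 0 := H I (le_of_eq hI)
  have h1 := congrArg (MvPolynomial.pderiv t) h0
  rw [map_sum, map_zero] at h1
  have h2 : ∀ j, MvPolynomial.pderiv t (g j * hasse I (x j))
      = MvPolynomial.pderiv t (g j) * hasse I (x j)
        + (I t + 1) • (g j * hasse (Function.update I t (I t + 1)) (x j)) := by
    intro j
    rw [MvPolynomial.pderiv_mul, pderiv_hasse, mul_smul_comm]
  rw [Finset.sum_congr rfl fun j _ => h2 j, Finset.sum_add_distrib, ← Finset.smul_sum] at h1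
  rw [nsmul_eq_mul] at h1 ⊢
  linear_combination h1
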